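/- Let Ω be a compact Hausdorff space, ν a complex regular Borel measure on Ω, and A a subalgebra of C(Ω) with ∫ f dν = 0 for all f ∈ A. If 1 ∈ A (so that in particular ν(Ω) = 0) and the closure of A in L²(|ν|) is all of L²(|ν|), then |ν|(Ω) = 0. -/

import Mathlib

open MeasureTheory

/-- A complex regular Borel measure, encoded via its polar decomposition. -/
structure ComplexRegularBorelMeasure (Ω : Type*) [TopologicalSpace Ω] [MeasurableSpace Ω] where
  variation : Measure Ω
  polar : Ω → ℂ
  finite : IsFiniteMeasure variation
  regular : variation.Regular
  measurable_polar : Measurable polar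
  norm_polar : ∀ᵐ x ∂variation, ‖polar x‖ = 1

/-- The integral of a function against the complex measure. -/
noncomputable def ComplexRegularBorelMeasure.integral {Ω : Type*} [TopologicalSpace Ω]
    [MeasurableSpace Ω] (ν : ComplexRegularBorelMeasure Ω) (f : Ω → ℂ) : ℂ :=
  ∫ x, f x * ν.polar x ∂ν.variation

/-!
The density `conj (dν / d|ν|)` of the complex measure lies in `L²(|ν|)`, and its inner product
with the class of `f` is `∫ f dν`. Hence it is orthogonal to the dense set of classes of `A`, so
it vanishes; but it has modulus one `|ν|`-almost everywhere, which forces `|ν| = 0`.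
-/

open ComplexConjugate

theorem measure_univ_eq_zero_of_ae_eq_zero_of_ae_ne_zero {α M : Type*} [MeasurableSpace α]
    [Zero M] {μ : Measure α} {f : α → M} (h0 : f =ᵐ[μ] 0) (hne : ∀ᵐ x ∂μ, f x ≠ 0) :
    μ Set.univ = 0 := by
  have : ∀ᵐ _ ∂μ, False := by
    filter_upwards [h0, hne] with x hx hx' using hx' hx
  rwa [Filter.eventually_false_iff_eq_bot, ae_eq_bot, ← Measure.measure_univ_eq_zero]
    at this

namespace ComplexRegularBorelMeasure

variable {Ω : Type*} [TopologicalSpace Ω] [MeasurableSpace Ω] (ν : ComplexRegularBorelMeasure Ω)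

attribute [local instance] ComplexRegularBorelMeasure.finite

theorem ae_conj_polar_ne_zero : ∀ᵐ x ∂ν.variation, conj (ν.polar x) ≠ 0 := by
  filter_upwards [ν.norm_polar] with x hx
  rw [map_ne_zero, ← norm_ne_zero_iff, hx]
  exact one_ne_zero

theorem memLp_conj_polar : MemLp (fun x ↦ conj (ν.polar x)) 2 ν.variation :=
  .of_bound (Complex.continuous_conj.measurable.comp ν.measurable_polar).aestronglyMeasurable 1
    (by filter_upwards [ν.norm_polar] with x hx; simp [hx])

noncomputable def conjPolarLp : Lp ℂ 2 ν.variation :=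
  ν.memLp_conj_polar.toLp _

theorem coeFn_conjPolarLp : ν.conjPolarLp =ᵐ[ν.variation] fun x ↦ conj (ν.polar x) :=
  ν.memLp_conj_polar.coeFn_toLp

theorem variation_univ_eq_zero_of_conjPolarLp_eq_zero (h : ν.conjPolarLp = 0) :
    ν.variation Set.univ = 0 := by
  have hzero : (fun x ↦ conj (ν.polar x)) =ᵐ[ν.variation] 0 := by
    have := ν.coeFn_conjPolarLp
    rw [h] at this
    exact this.symm.trans (Lp.coeFn_zero ..)
  exact measure_univ_eq_zero_of_ae_eq_zero_of_ae_ne_zero hzero ν.ae_conj_polar_ne_zero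

theorem inner_conjPolarLp {ξ : Lp ℂ 2 ν.variation} {f : Ω → ℂ} (hξ : ξ =ᵐ[ν.variation] f) :
    inner ℂ ν.conjPolarLp ξ = ν.integral f := by
  rw [L2.inner_def, integral]
  refine integral_congr_ae ?_
  filter_upwards [ν.coeFn_conjPolarLp, hξ] with x hpolar hξx
  simp [hpolar, hξx]

end ComplexRegularBorelMeasure

theorem stmt17_general {Ω : Type*} [TopologicalSpace Ω]
    [MeasurableSpace Ω] (ν : ComplexRegularBorelMeasure Ω)
    (A : Subalgebra ℂ C(Ω, ℂ))
    (hann : ∀ f ∈ A, ν.integral (⇑f) = 0)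
    (hdense : closure {ξ : Lp ℂ 2 ν.variation |
      ∃ f ∈ A, (⇑ξ : Ω → ℂ) =ᵐ[ν.variation] ⇑f} = Set.univ) :
    ν.variation Set.univ = 0 := by
  refine ν.variation_univ_eq_zero_of_conjPolarLp_eq_zero ?_
  refine (dense_iff_closure_eq.mpr hdense).eq_zero_of_inner_left ℂ ?_
  rintro ξ ⟨f, hf, hξf⟩
  rw [ν.inner_conjPolarLp hξf, hann f hf]

/-- If a unital subalgebra `A` of `C(Ω)` is annihilated by the complex regular Borel
measure `ν` and the closure of `A` in `L²(|ν|)` is all of `L²(|ν|)`, then `|ν|(Ω) = 0`. -/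
theorem stmt17 {Ω : Type*} [TopologicalSpace Ω] [CompactSpace Ω] [T2Space Ω]
    [MeasurableSpace Ω] [BorelSpace Ω] (ν : ComplexRegularBorelMeasure Ω)
    (A : Subalgebra ℂ C(Ω, ℂ))
    (hann : ∀ f ∈ A, ν.integral (⇑f) = 0)
    (hdense : closure {ξ : Lp ℂ 2 ν.variation |
      ∃ f ∈ A, (⇑ξ : Ω → ℂ) =ᵐ[ν.variation] ⇑f} = Set.univ) :
    ν.variation Set.univ = 0 :=
  stmt17_general ν A hann hdense
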